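/- arXiv:2404.17696 — 4 statements merged into one kernel-verified Lean document; each statement's English description precedes it below -/
import Mathlib

section
/- Let f : ℝⁿ → ℝ and g : ℝⁿ → ℝᵐ be twice continuously differentiable, K ⊆ ℝᵐ closed, C = g⁻¹(K), x̄ ∈ C, d ∈ T_C(x̄), and suppose x̄ is a local optimal solution of min f subject to g(x) ∈ K in direction d with ∇f(x̄)·d = 0. Then for every λ ∈ ℝᵐ with ∇f(x̄) + ∇g(x̄)ᵀλ = 0: (i) σ_Θ(λ) ≤ 0 where Θ = ∇g(x̄)(T''_C(x̄; d)); and (ii) ∇²_{xx}L(x̄,λ)(d,d) − σ_Ω(λ) = inf{∇f(x̄)·w + ∇²f(x̄)(d,d) : w ∈ T²_C(x̄; d)} ≥ 0, where Ω = ∇g(x̄)(T²_C(x̄; d)) + ∇²g(x̄)(d,d) and L(x,λ) = f(x) + ⟨λ, g(x)⟩. -/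
/-!
Points of `C` of the form `x̄ + t d + s u` with `s = o(t)` eventually lie in the directional
neighbourhood `x̄ + V_{ρ,δ}(d)`, so `f` does not decrease along them. A second-order Taylor
expansion together with `∇f(x̄) d = 0` gives
`f(x̄ + t d + s u) - f(x̄) = s ∇f(x̄) u + (t² / 2) ∇²f(x̄)(d, d) + o(t²)`; dividing by `s` and
letting `t² / s → c` yields `∇f(x̄) w + (c / 2) ∇²f(x̄)(d, d) ≥ 0`. Elements of `T²_C(x̄; d)` give
this with `c = 2`, elements of `T''_C(x̄; d)` with `c = 0`. The multiplier rule turns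
`⟨λ, ∇g(x̄) w⟩` into `-∇f(x̄) w`, and `a ↦ c - a` exchanges suprema and infima in `EReal`.
-/

open Filter Topology Set
open scoped RealInnerProductSpace

noncomputable section

variable {E : Type*} [NormedAddCommGroup E] [InnerProductSpace ℝ E]

/-- Bouligand (contingent) tangent cone. -/
def tangentConeB (S : Set E) (x : E) : Set E :=
  {d | ∃ (t : ℕ → ℝ) (dk : ℕ → E), (∀ k, 0 < t k) ∧
    Tendsto t atTop (nhds 0) ∧ Tendsto dk atTop (nhds d) ∧
    ∀ k, x + t k • dk k ∈ S}

/-- Outer second-order tangent set. -/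
def secondTangent (S : Set E) (x d : E) : Set E :=
  {w | ∃ (t : ℕ → ℝ) (wk : ℕ → E), (∀ k, 0 < t k) ∧
    Tendsto t atTop (nhds 0) ∧ Tendsto wk atTop (nhds w) ∧
    ∀ k, x + t k • d + ((1/2 : ℝ) * t k ^ 2) • wk k ∈ S}

/-- Asymptotic second-order tangent cone. -/
def asympTangent (S : Set E) (x d : E) : Set E :=
  {w | ∃ (t r : ℕ → ℝ) (wk : ℕ → E), (∀ k, 0 < t k) ∧ (∀ k, 0 < r k) ∧
    Tendsto t atTop (nhds 0) ∧ Tendsto r atTop (nhds 0) ∧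
    Tendsto (fun k => t k / r k) atTop (nhds 0) ∧
    Tendsto wk atTop (nhds w) ∧
    ∀ k, x + t k • d + ((1/2 : ℝ) * t k * r k) • wk k ∈ S}

/-- Fréchet (regular) normal cone (empty, by convention, outside of `S`). -/
def frechetNormal (S : Set E) (x : E) : Set E :=
  {v | x ∈ S ∧ ∀ ε > (0:ℝ), ∃ δ > (0:ℝ), ∀ y ∈ S, ‖y - x‖ < δ →
    ⟪v, y - x⟫ ≤ ε * ‖y - x‖}

/-- Limiting (Mordukhovich) normal cone. -/
def limitingNormal (S : Set E) (x : E) : Set E :=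
  {v | ∃ (xk vk : ℕ → E), Tendsto xk atTop (nhds x) ∧
    Tendsto vk atTop (nhds v) ∧ ∀ k, vk k ∈ frechetNormal S (xk k)}

/-- Directional limiting normal cone. -/
def dirLimitingNormal (S : Set E) (x d : E) : Set E :=
  {v | ∃ (t : ℕ → ℝ) (dk vk : ℕ → E), (∀ k, 0 < t k) ∧
    Tendsto t atTop (nhds 0) ∧ Tendsto dk atTop (nhds d) ∧
    Tendsto vk atTop (nhds v) ∧ ∀ k, vk k ∈ frechetNormal S (x + t k • dk k)}

/-- Directional regular (Clarke) tangent cone. -/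
def dirClarkeTangent (S : Set E) (x d : E) : Set E :=
  {v | ∀ (t : ℕ → ℝ) (dk : ℕ → E), (∀ k, 0 < t k) →
    Tendsto t atTop (nhds 0) → Tendsto dk atTop (nhds d) →
    (∀ k, x + t k • dk k ∈ S) →
    ∃ vk : ℕ → E, Tendsto vk atTop (nhds v) ∧
      ∀ k, vk k ∈ tangentConeB S (x + t k • dk k)}

/-- Directional neighborhood `V_{ρ,δ}(d)`. -/
def dirNbhd (d : E) (ρ δ : ℝ) : Set E :=
  {w | ‖w‖ ≤ δ ∧ ‖‖d‖ • w - ‖w‖ • d‖ ≤ ρ * ‖w‖ * ‖d‖}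

/-- Support function, with values in `EReal` (so that `σ_∅ = -∞`). -/
def suppFn (A : Set E) (l : E) : EReal :=
  ⨆ u ∈ A, ((⟪l, u⟫ : ℝ) : EReal)

open Asymptotics

section Taylor

variable {E F : Type*} [NormedAddCommGroup E] [NormedSpace ℝ E]
  [NormedAddCommGroup F] [NormedSpace ℝ F]

theorem isLittleO_sq_of_hasFDerivAt {G : E → F} {G' : E → E →L[ℝ] F}
    (hG : ∀ h, HasFDerivAt G (G' h) h) (hG0 : G 0 = 0) (hG' : G' =o[𝓝 0] fun h => h) :
    G =o[𝓝 0] fun h => ‖h‖ ^ 2 := by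
  refine isLittleO_iff.2 fun ε hε => ?_
  obtain ⟨δ, hδ, hsmall⟩ := Metric.eventually_nhds_iff_ball.1 (isLittleO_iff.1 hG' hε)
  filter_upwards [Metric.ball_mem_nhds (0 : E) hδ] with h hh
  have hball : Metric.closedBall (0 : E) ‖h‖ ⊆ Metric.ball 0 δ :=
    Metric.closedBall_subset_ball (by simpa using hh)
  have hbound : ∀ u ∈ Metric.closedBall (0 : E) ‖h‖, ‖G' u‖ ≤ ε * ‖h‖ := fun u hu =>
    (hsmall u (hball hu)).trans (mul_le_mul_of_nonneg_left (by simpa using hu) hε.le)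
  have hmvt := (convex_closedBall (0 : E) ‖h‖).norm_image_sub_le_of_norm_hasFDerivWithin_le
    (fun u _ => (hG u).hasFDerivWithinAt) hbound
    (Metric.mem_closedBall_self (norm_nonneg h))
    (mem_closedBall_zero_iff.2 le_rfl)
  rw [hG0, sub_zero, sub_zero] at hmvt
  rwa [norm_pow, norm_norm, sq, ← mul_assoc]

theorem ContDiff.isLittleO_taylor_two {f : E → F} (hf : ContDiff ℝ 2 f) (x : E) :
    (fun h => f (x + h) - f x - fderiv ℝ f x h - (2 : ℝ)⁻¹ • fderiv ℝ (fderiv ℝ f) x h h)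
      =o[𝓝 0] fun h => ‖h‖ ^ 2 := by
  set H := fderiv ℝ (fderiv ℝ f) x
  have hsymm : ∀ v w, H v w = H w v := hf.contDiffAt.isSymmSndFDerivAt (by simp)
  have hdf : Differentiable ℝ f := hf.differentiable two_ne_zero
  have hH : HasFDerivAt (fderiv ℝ f) H x :=
    ((hf.fderiv_right le_rfl).differentiable one_ne_zero x).hasFDerivAt
  refine isLittleO_sq_of_hasFDerivAt (G' := fun h => fderiv ℝ f (x + h) - fderiv ℝ f x - H h)
    (fun h => ?_) (by simp) (hasFDerivAt_iff_isLittleO_nhds_zero.1 hH)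
  -- the symmetry of `H` is what makes `H h` (rather than its symmetric part) the derivative
  have hquad : HasFDerivAt (fun h => (2 : ℝ)⁻¹ • H h h) (H h) h := by
    refine ((H.hasFDerivAt.clm_apply (hasFDerivAt_id h)).const_smul (2 : ℝ)⁻¹).congr_fderiv ?_
    ext v
    simp [hsymm v h, ← add_smul, ← two_mul]
  exact ((((hasFDerivAt_comp_add_left x).2 (hdf (x + h)).hasFDerivAt).sub_const (f x)).sub
    (fderiv ℝ f x).hasFDerivAt).sub hquad

theorem ContDiff.tendsto_taylor_two_inv_sq_smul {f : E → F} (hf : ContDiff ℝ 2 f) (x d : E)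
    {t : ℕ → ℝ} {v : ℕ → E} (ht : ∀ k, t k ≠ 0) (ht0 : Tendsto t atTop (𝓝 0))
    (hv : Tendsto v atTop (𝓝 d)) :
    Tendsto (fun k => (t k ^ 2)⁻¹ • (f (x + t k • v k) - f x - fderiv ℝ f x (t k • v k)))
      atTop (𝓝 ((2 : ℝ)⁻¹ • fderiv ℝ (fderiv ℝ f) x d d)) := by
  have hh : Tendsto (fun k => t k • v k) atTop (𝓝 0) := by simpa using ht0.smul hv
  have hnorm : (fun k => ‖t k • v k‖ ^ 2) =O[atTop] fun k => t k ^ 2 := by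
    have := (isBigO_refl (fun k => t k ^ 2) atTop).mul ((hv.norm.pow 2).isBigO_one ℝ)
    simpa [norm_smul, mul_pow] using this
  have hrem := (((hf.isLittleO_taylor_two x).comp_tendsto hh).trans_isBigO hnorm
    ).tendsto_inv_smul_nhds_zero
  have hquad : Tendsto (fun k => (2 : ℝ)⁻¹ • fderiv ℝ (fderiv ℝ f) x (v k) (v k)) atTop
      (𝓝 ((2 : ℝ)⁻¹ • fderiv ℝ (fderiv ℝ f) x d d)) :=
    ((by fun_prop : Continuous fun y => (2 : ℝ)⁻¹ • fderiv ℝ (fderiv ℝ f) x y y).tendsto d).comp hv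
  have hlim := hrem.add hquad
  rw [zero_add] at hlim
  refine hlim.congr fun k => ?_
  have hcoef : (t k ^ 2)⁻¹ * (2⁻¹ * (t k * t k)) = 2⁻¹ := by field_simp [ht k]
  simp only [Function.comp_apply, map_smul, smul_apply, smul_sub, smul_smul,
    hcoef, sub_add_cancel]

end Taylor

section DirectionalMinimum

variable {E : Type*} [NormedAddCommGroup E] [InnerProductSpace ℝ E]

def IsDirLocalMinOn (f : E → ℝ) (S : Set E) (x d : E) : Prop :=
  ∃ ρ > (0 : ℝ), ∃ δ > (0 : ℝ), ∀ y ∈ S, y - x ∈ dirNbhd d ρ δ → f x ≤ f y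

theorem eventually_smul_mem_dirNbhd {d : E} {ρ δ : ℝ} (hρ : 0 < ρ) (hδ : 0 < δ)
    {t : ℕ → ℝ} {v : ℕ → E} (ht : ∀ k, 0 ≤ t k) (ht0 : Tendsto t atTop (𝓝 0))
    (hv : Tendsto v atTop (𝓝 d)) :
    ∀ᶠ k in atTop, t k • v k ∈ dirNbhd d ρ δ := by
  have hsmall : ∀ᶠ k in atTop, ‖t k • v k‖ ≤ δ := by
    have : Tendsto (fun k => ‖t k • v k‖) atTop (𝓝 0) := by simpa using (ht0.smul hv).norm
    exact this.eventually (eventually_le_nhds hδ)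
  have hangle : ∀ᶠ k in atTop, ‖‖d‖ • v k - ‖v k‖ • d‖ ≤ ρ * ‖v k‖ * ‖d‖ := by
    rcases eq_or_ne d 0 with rfl | hd
    · simp
    have hL : Tendsto (fun k => ‖‖d‖ • v k - ‖v k‖ • d‖) atTop (𝓝 0) := by
      simpa using (((tendsto_const_nhds (x := ‖d‖)).smul hv).sub
        (hv.norm.smul (tendsto_const_nhds (x := d)))).norm
    have hR : Tendsto (fun k => ρ * ‖v k‖ * ‖d‖) atTop (𝓝 (ρ * ‖d‖ * ‖d‖)) :=
      (tendsto_const_nhds.mul hv.norm).mul tendsto_const_nhds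
    have hpos : 0 < ρ * ‖d‖ * ‖d‖ := by positivity
    exact (hL.eventually_lt hR hpos).mono fun k hk => hk.le
  filter_upwards [hsmall, hangle] with k hk_small hk_angle
  refine ⟨hk_small, ?_⟩
  have hscale : ‖d‖ • (t k • v k) - ‖t k • v k‖ • d = t k • (‖d‖ • v k - ‖v k‖ • d) := by
    rw [norm_smul, Real.norm_of_nonneg (ht k), smul_sub, smul_comm, mul_smul]
  calc ‖‖d‖ • (t k • v k) - ‖t k • v k‖ • d‖ = t k * ‖‖d‖ • v k - ‖v k‖ • d‖ := by
        rw [hscale, norm_smul, Real.norm_of_nonneg (ht k)]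
    _ ≤ t k * (ρ * ‖v k‖ * ‖d‖) := mul_le_mul_of_nonneg_left hk_angle (ht k)
    _ = ρ * ‖t k • v k‖ * ‖d‖ := by rw [norm_smul, Real.norm_of_nonneg (ht k)]; ring

namespace IsDirLocalMinOn

variable {f : E → ℝ} {S : Set E} {x d : E}

theorem eventually_le (hmin : IsDirLocalMinOn f S x d) {t : ℕ → ℝ} {v : ℕ → E}
    (ht : ∀ k, 0 ≤ t k) (ht0 : Tendsto t atTop (𝓝 0)) (hv : Tendsto v atTop (𝓝 d))
    (hmem : ∀ k, x + t k • v k ∈ S) :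
    ∀ᶠ k in atTop, f x ≤ f (x + t k • v k) := by
  obtain ⟨ρ, hρ, δ, hδ, hloc⟩ := hmin
  filter_upwards [eventually_smul_mem_dirNbhd hρ hδ ht ht0 hv] with k hk
  exact hloc _ (hmem k) (by rwa [add_sub_cancel_left])

theorem fderiv_add_hessian_nonneg (hmin : IsDirLocalMinOn f S x d) (hf : ContDiff ℝ 2 f)
    (hcrit : fderiv ℝ f x d = 0) {t s : ℕ → ℝ} {u : ℕ → E} {w : E} {c : ℝ}
    (ht : ∀ k, 0 < t k) (hs : ∀ k, 0 < s k) (ht0 : Tendsto t atTop (𝓝 0))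
    (hst : Tendsto (fun k => s k / t k) atTop (𝓝 0))
    (hts : Tendsto (fun k => t k ^ 2 / s k) atTop (𝓝 c)) (hu : Tendsto u atTop (𝓝 w))
    (hmem : ∀ k, x + t k • d + s k • u k ∈ S) :
    0 ≤ fderiv ℝ f x w + c / 2 * fderiv ℝ (fderiv ℝ f) x d d := by
  set v : ℕ → E := fun k => d + (s k / t k) • u k with hv_def
  have hv : Tendsto v atTop (𝓝 d) := by simpa using tendsto_const_nhds.add (hst.smul hu)
  have hxv : ∀ k, x + t k • v k = x + t k • d + s k • u k := fun k => by
    simp only [hv_def, smul_add, smul_smul, mul_div_cancel₀ _ (ht k).ne', add_assoc]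
  set q : ℕ → ℝ := fun k =>
    (t k ^ 2)⁻¹ • (f (x + t k • v k) - f x - fderiv ℝ f x (t k • v k)) with hq_def
  have hq : Tendsto q atTop (𝓝 ((2 : ℝ)⁻¹ • fderiv ℝ (fderiv ℝ f) x d d)) :=
    hf.tendsto_taylor_two_inv_sq_smul x d (fun k => (ht k).ne') ht0 hv
  have hb : Tendsto (fun k => fderiv ℝ f x (u k) + t k ^ 2 / s k * q k) atTop
      (𝓝 (fderiv ℝ f x w + c * ((2 : ℝ)⁻¹ • fderiv ℝ (fderiv ℝ f) x d d))) :=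
    (((fderiv ℝ f x).continuous.tendsto w).comp hu).add (hts.mul hq)
  have hb0 : ∀ᶠ k in atTop, 0 ≤ fderiv ℝ f x (u k) + t k ^ 2 / s k * q k := by
    filter_upwards [hmin.eventually_le (fun k => (ht k).le) ht0 hv
      (fun k => hxv k ▸ hmem k)] with k hk
    have hexp : f (x + t k • v k) - f x = s k * (fderiv ℝ f x (u k) + t k ^ 2 / s k * q k) := by
      simp only [hq_def, hv_def, map_smul, map_add, hcrit, smul_eq_mul]
      field_simp [(ht k).ne', (hs k).ne']
      ring
    exact (mul_nonneg_iff_of_pos_left (hs k)).1 (hexp ▸ sub_nonneg.2 hk)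
  have := ge_of_tendsto hb hb0
  rw [smul_eq_mul] at this
  linarith

theorem secondTangent_nonneg (hmin : IsDirLocalMinOn f S x d) (hf : ContDiff ℝ 2 f)
    (hcrit : fderiv ℝ f x d = 0) {w : E} (hw : w ∈ secondTangent S x d) :
    0 ≤ fderiv ℝ f x w + fderiv ℝ (fderiv ℝ f) x d d := by
  obtain ⟨t, u, ht, ht0, hu, hmem⟩ := hw
  have hst : Tendsto (fun k => (1 / 2 * t k ^ 2) / t k) atTop (𝓝 0) := by
    refine (by simpa using ht0.div_const 2 : Tendsto (fun k => t k / 2) atTop (𝓝 0)).congr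
      fun k => ?_
    field_simp [(ht k).ne']
  have hts : Tendsto (fun k => t k ^ 2 / (1 / 2 * t k ^ 2)) atTop (𝓝 2) :=
    tendsto_const_nhds.congr fun k => by field_simp [(ht k).ne']
  simpa using hmin.fderiv_add_hessian_nonneg hf hcrit ht (fun k => by have := ht k; positivity)
    ht0 hst hts hu hmem

theorem asympTangent_nonneg (hmin : IsDirLocalMinOn f S x d) (hf : ContDiff ℝ 2 f)
    (hcrit : fderiv ℝ f x d = 0) {w : E} (hw : w ∈ asympTangent S x d) :
    0 ≤ fderiv ℝ f x w := by
  obtain ⟨t, r, u, ht, hr, ht0, hr0, htr, hu, hmem⟩ := hw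
  have hst : Tendsto (fun k => (1 / 2 * t k * r k) / t k) atTop (𝓝 0) := by
    refine (by simpa using hr0.div_const 2 : Tendsto (fun k => r k / 2) atTop (𝓝 0)).congr
      fun k => ?_
    field_simp [(ht k).ne']
  have hts : Tendsto (fun k => t k ^ 2 / (1 / 2 * t k * r k)) atTop (𝓝 0) := by
    refine (by simpa using htr.const_mul 2 : Tendsto (fun k => 2 * (t k / r k)) atTop (𝓝 0)).congr
      fun k => ?_
    field_simp [(ht k).ne', (hr k).ne']
  simpa using hmin.fderiv_add_hessian_nonneg hf hcrit ht
    (fun k => by have := ht k; have := hr k; positivity) ht0 hst hts hu hmem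

end IsDirLocalMinOn

end DirectionalMinimum

namespace EReal

theorem coe_sub_coe_sub_cancel (c : ℝ) (x : EReal) : (c : EReal) - ((c : EReal) - x) = x := by
  induction x using EReal.rec with
  | bot => simp
  | coe y => rw [← coe_sub, ← coe_sub, sub_sub_cancel]
  | top => simp

theorem coe_sub_iSup {ι : Sort*} (c : ℝ) (u : ι → EReal) :
    (c : EReal) - ⨆ i, u i = ⨅ i, ((c : EReal) - u i) := by
  refine le_antisymm (le_iInf fun i => sub_le_sub le_rfl (le_iSup u i)) ?_
  have hsup : ⨆ i, u i ≤ c - ⨅ i, ((c : EReal) - u i) := iSup_le fun i =>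
    calc u i = c - (c - u i) := (coe_sub_coe_sub_cancel c (u i)).symm
      _ ≤ c - ⨅ i, ((c : EReal) - u i) := sub_le_sub le_rfl (iInf_le _ i)
  calc ⨅ i, ((c : EReal) - u i) = c - (c - ⨅ i, ((c : EReal) - u i)) :=
        (coe_sub_coe_sub_cancel _ _).symm
    _ ≤ c - ⨆ i, u i := sub_le_sub le_rfl hsup

end EReal

theorem stmt15_general {n m : ℕ} (f : EuclideanSpace ℝ (Fin n) → ℝ) (hf : ContDiff ℝ 2 f)
    (g : EuclideanSpace ℝ (Fin n) → EuclideanSpace ℝ (Fin m))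
    (K : Set (EuclideanSpace ℝ (Fin m)))
    (xb : EuclideanSpace ℝ (Fin n))
    (d : EuclideanSpace ℝ (Fin n))
    (hopt : ∃ ρ > (0:ℝ), ∃ δ > (0:ℝ), ∀ x ∈ g ⁻¹' K, x - xb ∈ dirNbhd d ρ δ → f xb ≤ f x)
    (hcrit : fderiv ℝ f xb d = 0)
    (l : EuclideanSpace ℝ (Fin m))
    (hl : ∀ u, fderiv ℝ f xb u + ⟪l, fderiv ℝ g xb u⟫ = 0) :
    suppFn (fderiv ℝ g xb '' asympTangent (g ⁻¹' K) xb d) l ≤ 0 ∧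
    ((((fderiv ℝ (fderiv ℝ f) xb d) d +
        ⟪l, (fderiv ℝ (fderiv ℝ g) xb d) d⟫ : ℝ) : EReal) -
      suppFn ((fun w => fderiv ℝ g xb w + (fderiv ℝ (fderiv ℝ g) xb d) d) ''
        secondTangent (g ⁻¹' K) xb d) l =
      ⨅ w ∈ secondTangent (g ⁻¹' K) xb d,
        (((fderiv ℝ f xb w + (fderiv ℝ (fderiv ℝ f) xb d) d : ℝ)) : EReal)) ∧
    (0 : EReal) ≤ ⨅ w ∈ secondTangent (g ⁻¹' K) xb d,
        (((fderiv ℝ f xb w + (fderiv ℝ (fderiv ℝ f) xb d) d : ℝ)) : EReal) := by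
  have hmin : IsDirLocalMinOn f (g ⁻¹' K) xb d := hopt
  have hlg : ∀ u, ⟪l, fderiv ℝ g xb u⟫ = -fderiv ℝ f xb u := fun u =>
    eq_neg_of_add_eq_zero_right (hl u)
  refine ⟨?_, ?_, ?_⟩
  · rw [suppFn, iSup_image]
    refine iSup₂_le fun w hw => ?_
    rw [hlg w]
    exact_mod_cast neg_nonpos.2 (hmin.asympTangent_nonneg hf hcrit hw)
  · rw [suppFn, iSup_image]
    simp only [EReal.coe_sub_iSup]
    refine iInf_congr fun w => iInf_congr fun _ => ?_
    rw [inner_add_right, hlg w, ← EReal.coe_sub]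
    congr 1
    ring
  · exact le_iInf₂ fun w hw => EReal.coe_nonneg.2 (hmin.secondTangent_nonneg hf hcrit hw)

theorem stmt15 {n m : ℕ} (f : EuclideanSpace ℝ (Fin n) → ℝ) (hf : ContDiff ℝ 2 f)
    (g : EuclideanSpace ℝ (Fin n) → EuclideanSpace ℝ (Fin m)) (hg : ContDiff ℝ 2 g)
    (K : Set (EuclideanSpace ℝ (Fin m))) (hK : IsClosed K)
    (xb : EuclideanSpace ℝ (Fin n)) (hxb : xb ∈ g ⁻¹' K)
    (d : EuclideanSpace ℝ (Fin n)) (hd : d ∈ tangentConeB (g ⁻¹' K) xb)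
    (hopt : ∃ ρ > (0:ℝ), ∃ δ > (0:ℝ), ∀ x ∈ g ⁻¹' K, x - xb ∈ dirNbhd d ρ δ → f xb ≤ f x)
    (hcrit : fderiv ℝ f xb d = 0)
    (l : EuclideanSpace ℝ (Fin m))
    (hl : ∀ u, fderiv ℝ f xb u + ⟪l, fderiv ℝ g xb u⟫ = 0) :
    suppFn (fderiv ℝ g xb '' asympTangent (g ⁻¹' K) xb d) l ≤ 0 ∧
    ((((fderiv ℝ (fderiv ℝ f) xb d) d +
        ⟪l, (fderiv ℝ (fderiv ℝ g) xb d) d⟫ : ℝ) : EReal) -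
      suppFn ((fun w => fderiv ℝ g xb w + (fderiv ℝ (fderiv ℝ g) xb d) d) ''
        secondTangent (g ⁻¹' K) xb d) l =
      ⨅ w ∈ secondTangent (g ⁻¹' K) xb d,
        (((fderiv ℝ f xb w + (fderiv ℝ (fderiv ℝ f) xb d) d : ℝ)) : EReal)) ∧
    (0 : EReal) ≤ ⨅ w ∈ secondTangent (g ⁻¹' K) xb d,
        (((fderiv ℝ f xb w + (fderiv ℝ (fderiv ℝ f) xb d) d : ℝ)) : EReal) :=
  stmt15_general f hf g K xb d hopt hcrit l hl
end
end

section
/- Let f : ℝⁿ → ℝ and g : ℝⁿ → ℝᵐ be twice continuously differentiable, K ⊆ ℝᵐ closed, C = g⁻¹(K), x̄ ∈ C, and d ∈ T_C(x̄) \ {0}. Assume ∇f(x̄)·d = 0 and there exists λ ∈ ℝᵐ with ∇f(x̄) + ∇g(x̄)ᵀλ = 0 such that: (i) ⟨λ, v⟩ < 0 for all v ∈ ∇g(x̄)(T''_C(x̄; d) ∩ ({d}^⊥ \ {0})); and (ii) ∇²_{xx}L(x̄,λ)(d,d) − σ_{∇g(x̄)(T²_C(x̄;d) ∩ {d}^⊥)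 + ∇²g(x̄)(d,d)}(λ) > 0, where L(x,λ) = f(x) + ⟨λ,g(x)⟩. Then the second-order growth condition holds at x̄ in direction d: there exist κ, ρ, δ > 0 with f(x) ≥ f(x̄) + κ‖x − x̄‖² for all x ∈ C ∩ (x̄ + V_{ρ,δ}(d)). -/
open Filter Topology Set
open scoped RealInnerProductSpace

noncomputable section

variable {E : Type*} [NormedAddCommGroup E] [InnerProductSpace ℝ E]

/-! If quadratic growth fails along `d`, there are points `x + t_k e_k ∈ C` with `t_k ↓ 0`,
`‖e_k‖ = ‖d‖`, `e_k → d`, at which `f` increases by `o(t_k²)` only. Writing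
`t_k e_k = t_k d + ½ t_k² w_k`, the second-order Taylor expansion and `∇f(x̄) d = 0` give
`∇f(x̄) w_k + ∇²f(x̄)(e_k, e_k) ≤ o(1)`, while `‖e_k‖ = ‖d‖` forces
`⟪w_k, d⟫ = -(t_k / 4) ‖w_k‖²`. If `(w_k)` has a bounded subsequence, a limit point lies in
`T²_C(x̄; d) ∩ {d}^⊥` and has `∇f(x̄) w + ∇²f(x̄)(d, d) ≤ 0`; otherwise a limit point of
`w_k / ‖w_k‖` lies in `T''_C(x̄; d) ∩ {d}^⊥ \ {0}` and has `∇f(x̄) w ≤ 0`. Since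
`∇f(x̄) = -∇g(x̄)ᵀλ`, the terms `⟪λ, ∇²g(x̄)(d, d)⟫` cancel in (ii), and (i), (ii) exclude
exactly these two limits. -/

def HasQuadraticGrowthAlong (f : E → ℝ) (S : Set E) (x d : E) : Prop :=
  ∃ κ > (0:ℝ), ∃ ρ > (0:ℝ), ∃ δ > (0:ℝ), ∀ y ∈ S,
    y - x ∈ dirNbhd d ρ δ → f x + κ * ‖y - x‖ ^ 2 ≤ f y

section Taylor

variable {F G : Type*} [NormedAddCommGroup F] [NormedSpace ℝ F] [NormedAddCommGroup G]
  [NormedSpace ℝ G]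

theorem ContDiff.isLittleO_sub_taylor_two {f : F → G} (hf : ContDiff ℝ 2 f) (x : F) :
    (fun h => f (x + h) - f x - fderiv ℝ f x h - (1 / 2 : ℝ) • fderiv ℝ (fderiv ℝ f) x h h)
      =o[𝓝 0] fun h => ‖h‖ ^ 2 := by
  set B := fderiv ℝ (fderiv ℝ f) x
  have hdiff : Differentiable ℝ f := hf.differentiable two_ne_zero
  have hB : HasFDerivAt (fderiv ℝ f) B x :=
    ((hf.fderiv_right le_rfl).differentiable one_ne_zero x).hasFDerivAt
  have hsymm : ∀ v w, B v w = B w v := (hf.contDiffAt.isSymmSndFDerivAt (by simp)).eq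
  have hderiv : ∀ u, HasFDerivAt
      (fun h => f (x + h) - f x - fderiv ℝ f x h - (1 / 2 : ℝ) • B h h)
      (fderiv ℝ f (x + u) - fderiv ℝ f x - B u) u := by
    intro u
    have hquad : HasFDerivAt (fun h => (1 / 2 : ℝ) • B h h) (B u) u := by
      refine (((B.hasFDerivAt).clm_apply (hasFDerivAt_id u)).const_smul
        (1 / 2 : ℝ)).congr_fderiv ?_
      ext v
      simp only [FunLike.coe_smul, FunLike.coe_add,
        ContinuousLinearMap.coe_comp, ContinuousLinearMap.coe_id', ContinuousLinearMap.flip_apply,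
        Pi.smul_apply, Pi.add_apply, Function.comp_apply, id, hsymm u v]
      module
    have hshift : HasFDerivAt (fun h => f (x + h)) (fderiv ℝ f (x + u)) u :=
      (hdiff (x + u)).hasFDerivAt.comp u ((hasFDerivAt_id u).const_add x)
    exact ((hshift.sub_const (f x)).sub (fderiv ℝ f x).hasFDerivAt).sub hquad
  have hsmall :
      (fun u => fderiv ℝ f (x + u) - fderiv ℝ f x - B u) =o[𝓝 0] fun u => ‖u - 0‖ ^ 1 := by
    have hx : Tendsto (fun u : F => x + u) (𝓝 0) (𝓝 x) := by
      simpa using (continuous_const_add x).tendsto 0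
    simpa [Function.comp_def] using (hB.isLittleO.comp_tendsto hx).norm_right
  simpa [nhdsWithin_univ] using
    convex_univ.isLittleO_pow_succ (mem_univ 0) (fun u _ => (hderiv u).hasFDerivWithinAt)
      (by simpa [nhdsWithin_univ] using hsmall)

theorem ContDiff.isLittleO_sub_taylor_two_comp {f : F → G} (hf : ContDiff ℝ 2 f) (x : F)
    {t : ℕ → ℝ} {e : ℕ → F} {e₀ : F} (ht : Tendsto t atTop (𝓝 0))
    (he : Tendsto e atTop (𝓝 e₀)) :
    (fun k => f (x + t k • e k) - f x - t k • fderiv ℝ f x (e k)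
        - (t k ^ 2 / 2) • fderiv ℝ (fderiv ℝ f) x (e k) (e k)) =o[atTop] fun k => t k ^ 2 := by
  have hte : Tendsto (fun k => t k • e k) atTop (𝓝 0) := by
    simpa using ht.smul he
  have hsq : (fun k => ‖t k • e k‖ ^ 2) =O[atTop] fun k => t k ^ 2 := by
    have := (Asymptotics.isBigO_refl (fun k => t k ^ 2) atTop).mul
      ((he.norm.pow 2).isBigO_one (F := ℝ))
    simpa [norm_smul, mul_pow] using this
  refine ((hf.isLittleO_sub_taylor_two x).comp_tendsto hte).trans_isBigO hsq |>.congr_left ?_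
  intro k
  simp only [Function.comp_apply, map_smul, smul_apply, smul_smul]
  congr 2
  ring

end Taylor

theorem norm_smul_sub_le_of_mem_dirNbhd {d u : E} {ρ δ : ℝ} (hu : u ∈ dirNbhd d ρ δ)
    (hu0 : u ≠ 0) : ‖(‖d‖ / ‖u‖) • u - d‖ ≤ ρ * ‖d‖ := by
  have hpos : 0 < ‖u‖ := norm_pos_iff.2 hu0
  have hscale : ‖u‖ • ((‖d‖ / ‖u‖) • u - d) = ‖d‖ • u - ‖u‖ • d := by
    rw [smul_sub, smul_smul, mul_div_cancel₀ _ hpos.ne']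
  have := hu.2
  rw [← hscale, norm_smul, norm_norm] at this
  nlinarith

theorem inner_eq_of_norm_add_smul_eq {d w : E} {s : ℝ} (hs : s ≠ 0)
    (h : ‖d + s • w‖ = ‖d‖) : ⟪w, d⟫ = -(s / 2) * ‖w‖ ^ 2 := by
  have hsq := congrArg (· ^ 2) h
  simp only [norm_add_sq_real, norm_smul, real_inner_smul_right, mul_pow, Real.norm_eq_abs,
    sq_abs, real_inner_comm w d] at hsq
  have : s * (2 * ⟪w, d⟫ + s * ‖w‖ ^ 2) = 0 := by linarith
  field_simp
  linarith [(mul_eq_zero.1 this).resolve_left hs]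

theorem exists_seq_of_not_hasQuadraticGrowthAlong {f : E → ℝ} {S : Set E} {x d : E}
    (hd : d ≠ 0) (hgrowth : ¬HasQuadraticGrowthAlong f S x d) :
    ∃ (t ε : ℕ → ℝ) (e : ℕ → E), (∀ k, 0 < t k) ∧ Tendsto t atTop (𝓝 0) ∧
      Tendsto e atTop (𝓝 d) ∧ (∀ k, ‖e k‖ = ‖d‖) ∧ (∀ k, x + t k • e k ∈ S) ∧
      Tendsto ε atTop (𝓝 0) ∧ ∀ k, f (x + t k • e k) < f x + ε k * t k ^ 2 := by
  unfold HasQuadraticGrowthAlong at hgrowth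
  push Not at hgrowth
  have hpos : ∀ k : ℕ, (0:ℝ) < 1 / (k + 1) := fun k => by positivity
  choose y hyS hyV hyf using fun k => hgrowth _ (hpos k) _ (hpos k) _ (hpos k)
  have hu0 : ∀ k, y k - x ≠ 0 := fun k h => by
    simpa [sub_eq_zero.1 h] using hyf k
  have hd' : 0 < ‖d‖ := norm_pos_iff.2 hd
  have hu' : ∀ k, 0 < ‖y k - x‖ := fun k => norm_pos_iff.2 (hu0 k)
  have hlim : Tendsto (fun k : ℕ => (1:ℝ) / (k + 1)) atTop (𝓝 0) :=
    tendsto_one_div_add_atTop_nhds_zero_nat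
  refine ⟨fun k => ‖y k - x‖ / ‖d‖, fun k => ‖d‖ ^ 2 / (k + 1),
    fun k => (‖d‖ / ‖y k - x‖) • (y k - x), fun k => div_pos (hu' k) hd', ?_, ?_, ?_, ?_, ?_, ?_⟩
  · refine squeeze_zero (fun k => (div_pos (hu' k) hd').le) (fun k => ?_)
      (by simpa only [zero_div] using hlim.div_const ‖d‖)
    exact div_le_div_of_nonneg_right (hyV k).1 hd'.le
  · rw [tendsto_iff_norm_sub_tendsto_zero]
    refine squeeze_zero (fun k => norm_nonneg _)
      (fun k => norm_smul_sub_le_of_mem_dirNbhd (hyV k) (hu0 k)) ?_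
    simpa using hlim.mul_const ‖d‖
  · intro k
    rw [norm_smul, norm_div, norm_norm, norm_norm, div_mul_cancel₀ _ (hu' k).ne']
  · intro k
    rw [smul_smul, div_mul_div_cancel₀ hd'.ne', div_self (hu' k).ne', one_smul,
      add_sub_cancel]
    exact hyS k
  · simpa [div_eq_mul_one_div (‖d‖ ^ 2)] using hlim.const_mul (‖d‖ ^ 2)
  · intro k
    rw [smul_smul, div_mul_div_cancel₀ hd'.ne', div_self (hu' k).ne', one_smul, add_sub_cancel]
    refine (hyf k).trans_eq ?_
    field_simp

theorem exists_secondOrder_seq_of_not_hasQuadraticGrowthAlong {f : E → ℝ}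
    (hf : ContDiff ℝ 2 f) {S : Set E} {x d : E} (hd : d ≠ 0) (hcrit : fderiv ℝ f x d = 0)
    (hgrowth : ¬HasQuadraticGrowthAlong f S x d) :
    ∃ (t c : ℕ → ℝ) (e w : ℕ → E), (∀ k, 0 < t k) ∧ Tendsto t atTop (𝓝 0) ∧
      Tendsto e atTop (𝓝 d) ∧ Tendsto (fun k => t k * ‖w k‖) atTop (𝓝 0) ∧
      (∀ k, x + t k • d + ((1 / 2 : ℝ) * t k ^ 2) • w k ∈ S) ∧
      (∀ k, ⟪w k, d⟫ = -(t k / 4) * ‖w k‖ ^ 2) ∧ Tendsto c atTop (𝓝 0) ∧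
      ∀ k, fderiv ℝ f x (w k) + fderiv ℝ (fderiv ℝ f) x (e k) (e k) ≤ c k := by
  obtain ⟨t, ε, e, ht, ht0, he, hnorm, hS, hε, hlt⟩ :=
    exists_seq_of_not_hasQuadraticGrowthAlong hd hgrowth
  set Df := fderiv ℝ f x
  set B := fderiv ℝ (fderiv ℝ f) x
  set R : ℕ → ℝ := fun k => f (x + t k • e k) - f x - t k • Df (e k)
    - (t k ^ 2 / 2) • B (e k) (e k)
  have hR : R =o[atTop] fun k => t k ^ 2 := hf.isLittleO_sub_taylor_two_comp x ht0 he
  set w : ℕ → E := fun k => (2 / t k) • (e k - d)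
  have hew : ∀ k, e k = d + (t k / 2) • w k := fun k => by
    simp [w, smul_smul, (ht k).ne']
  have htw : ∀ k, t k * ‖w k‖ = 2 * ‖e k - d‖ := fun k => by
    simp only [w, norm_smul, Real.norm_of_nonneg (div_pos two_pos (ht k)).le]
    field_simp [(ht k).ne']
  refine ⟨t, fun k => 2 * ε k - 2 * (R k / t k ^ 2), e, w, ht, ht0, he, ?_, fun k => ?_,
    fun k => ?_, ?_, fun k => ?_⟩
  · simpa [htw] using ((he.sub_const d).norm.const_mul 2)
  · have hk := hS k
    rwa [hew k, smul_add, smul_smul, ← add_assoc, show t k * (t k / 2) = 1 / 2 * t k ^ 2 by ring]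
      at hk
  · rw [inner_eq_of_norm_add_smul_eq (s := t k / 2) (by linarith [ht k]) (by rw [← hew, hnorm])]
    ring
  · simpa using (hε.const_mul 2).sub (hR.tendsto_div_nhds_zero.const_mul 2)
  · have hDe : Df (e k) = t k / 2 * Df (w k) := by
      rw [hew k, map_add, map_smul, hcrit, smul_eq_mul, zero_add]
    have ht2 : 0 < t k ^ 2 := by have := ht k; positivity
    have hRt : t k ^ 2 * (R k / t k ^ 2) = R k := mul_div_cancel₀ _ ht2.ne'
    refine le_of_mul_le_mul_left ?_ ht2
    rw [mul_sub, mul_left_comm (t k ^ 2) 2 (R k / _), hRt]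
    simp only [R, hDe, smul_eq_mul]
    nlinarith [hlt k]

theorem exists_subseq_tendsto_inv_max_norm_smul {F : Type*} [NormedAddCommGroup F]
    [NormedSpace ℝ F] [ProperSpace F] {w : ℕ → F} (hw : Tendsto (fun k => ‖w k‖) atTop atTop) :
    ∃ v₀ : F, ‖v₀‖ = 1 ∧ ∃ φ : ℕ → ℕ, StrictMono φ ∧
      Tendsto (fun k => (max ‖w (φ k)‖ 1)⁻¹ • w (φ k)) atTop (𝓝 v₀) := by
  have hv1 : ∀ᶠ k in atTop, ‖(max ‖w k‖ 1)⁻¹ • w k‖ = 1 := by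
    filter_upwards [hw.eventually_ge_atTop 1] with k hk
    rw [max_eq_left hk, norm_smul, norm_inv, norm_norm,
      inv_mul_cancel₀ (one_pos.trans_le hk).ne']
  obtain ⟨v₀, -, φ, hφ, hvφ⟩ := tendsto_subseq_of_frequently_bounded
    (Metric.isBounded_closedBall (x := 0) (r := 1))
    (hv1.frequently.mono fun k hk => mem_closedBall_zero_iff.2 hk.le)
  refine ⟨v₀, tendsto_nhds_unique hvφ.norm (tendsto_const_nhds.congr' ?_), φ, hφ, hvφ⟩
  exact (hφ.tendsto_atTop.eventually hv1).mono fun k hk => hk.symm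

section Limits

variable [ProperSpace E] {S : Set E} {x d : E} {L : E →L[ℝ] ℝ} {B : E →L[ℝ] E →L[ℝ] ℝ}
  {t c : ℕ → ℝ} {e w : ℕ → E}

theorem exists_mem_secondTangent_of_not_tendsto_atTop (ht : ∀ k, 0 < t k)
    (ht0 : Tendsto t atTop (𝓝 0)) (he : Tendsto e atTop (𝓝 d))
    (hS : ∀ k, x + t k • d + ((1 / 2 : ℝ) * t k ^ 2) • w k ∈ S)
    (hinner : ∀ k, ⟪w k, d⟫ = -(t k / 4) * ‖w k‖ ^ 2) (hc : Tendsto c atTop (𝓝 0))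
    (hle : ∀ k, L (w k) + B (e k) (e k) ≤ c k) (hw : ¬Tendsto (fun k => ‖w k‖) atTop atTop) :
    ∃ w₀ ∈ secondTangent S x d, ⟪w₀, d⟫ = 0 ∧ L w₀ + B d d ≤ 0 := by
  obtain ⟨r, hr⟩ : ∃ r, ∃ᶠ k in atTop, ‖w k‖ < r := by
    simpa only [tendsto_atTop, not_forall, not_eventually, not_le] using hw
  obtain ⟨w₀, -, φ, hφ, hwφ⟩ := tendsto_subseq_of_frequently_bounded
    (Metric.isBounded_closedBall (x := 0) (r := r))
    (hr.mono fun k hk => mem_closedBall_zero_iff.2 hk.le)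
  have hφ' := hφ.tendsto_atTop
  refine ⟨w₀, ⟨t ∘ φ, w ∘ φ, fun k => ht _, ht0.comp hφ', hwφ, fun k => hS _⟩, ?_, ?_⟩
  · have hlim : Tendsto (fun k => -(t (φ k) / 4) * ‖w (φ k)‖ ^ 2) atTop (𝓝 ⟪w₀, d⟫) := by
      have := hwφ.inner (𝕜 := ℝ) (tendsto_const_nhds (x := d))
      simpa only [Function.comp_apply, hinner] using this
    refine tendsto_nhds_unique hlim ?_
    simpa using ((ht0.comp hφ').div_const 4).neg.mul (hwφ.norm.pow 2)
  · exact le_of_tendsto_of_tendsto' ((L.continuous.tendsto _).comp hwφ |>.add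
      (((B.continuous.clm_apply continuous_id).tendsto d).comp (he.comp hφ'))) (hc.comp hφ')
      fun k => hle _

theorem exists_mem_asympTangent_of_tendsto_atTop (ht : ∀ k, 0 < t k)
    (ht0 : Tendsto t atTop (𝓝 0)) (he : Tendsto e atTop (𝓝 d))
    (htw : Tendsto (fun k => t k * ‖w k‖) atTop (𝓝 0))
    (hS : ∀ k, x + t k • d + ((1 / 2 : ℝ) * t k ^ 2) • w k ∈ S)
    (hinner : ∀ k, ⟪w k, d⟫ = -(t k / 4) * ‖w k‖ ^ 2) (hc : Tendsto c atTop (𝓝 0))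
    (hle : ∀ k, L (w k) + B (e k) (e k) ≤ c k) (hw : Tendsto (fun k => ‖w k‖) atTop atTop) :
    ∃ v₀ ∈ asympTangent S x d, v₀ ≠ 0 ∧ ⟪v₀, d⟫ = 0 ∧ L v₀ ≤ 0 := by
  -- `max ‖w k‖ 1` rather than `‖w k‖` keeps the scale `r k = t k * m k` of the asymptotic
  -- tangent cone positive for every `k`, not only eventually.
  set m : ℕ → ℝ := fun k => max ‖w k‖ 1
  have hm : ∀ k, 0 < m k := fun k => one_pos.trans_le (le_max_right _ _)
  have hminv : Tendsto (fun k => (m k)⁻¹) atTop (𝓝 0) :=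
    (tendsto_atTop_mono (fun k => le_max_left _ _) hw).inv_tendsto_atTop
  have hmw : ∀ᶠ k in atTop, m k = ‖w k‖ :=
    (hw.eventually_ge_atTop 1).mono fun k hk => max_eq_left hk
  set v : ℕ → E := fun k => (m k)⁻¹ • w k
  obtain ⟨v₀, hv₀, φ, hφ, hvφ⟩ := exists_subseq_tendsto_inv_max_norm_smul hw
  have hφ' := hφ.tendsto_atTop
  have hr : Tendsto (fun k => t k * m k) atTop (𝓝 0) := by
    simpa [m, mul_max_of_nonneg _ _ (ht _).le] using htw.max ht0
  have hvd : Tendsto (fun k => ⟪v k, d⟫) atTop (𝓝 0) := by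
    have hlim : Tendsto (fun k => -(t k * ‖w k‖ / 4)) atTop (𝓝 0) := by
      simpa using (htw.div_const 4).neg
    refine hlim.congr' ?_
    filter_upwards [hmw, hw.eventually_gt_atTop 0] with k hk hk0
    simp only [v, real_inner_smul_left, hinner, hk]
    field_simp
  have hle' : ∀ k, L (v k) + (m k)⁻¹ * B (e k) (e k) ≤ (m k)⁻¹ * c k := fun k => by
    simp only [v, map_smul, smul_eq_mul, ← mul_add]
    exact mul_le_mul_of_nonneg_left (hle k) (inv_nonneg.2 (hm k).le)
  have hBe : Tendsto (fun k => B (e k) (e k)) atTop (𝓝 (B d d)) :=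
    ((B.continuous.clm_apply continuous_id).tendsto d).comp he
  refine ⟨v₀, ⟨t ∘ φ, (fun k => t k * m k) ∘ φ, v ∘ φ, fun k => ht _,
    fun k => mul_pos (ht _) (hm _), ht0.comp hφ', hr.comp hφ', ?_, hvφ, fun k => ?_⟩,
    norm_ne_zero_iff.1 (by rw [hv₀]; exact one_ne_zero),
    tendsto_nhds_unique (hvφ.inner (𝕜 := ℝ) tendsto_const_nhds) (hvd.comp hφ'), ?_⟩
  · refine (hminv.comp hφ').congr fun k => ?_
    simp only [Function.comp_apply]
    field_simp [(ht (φ k)).ne']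
  · simp only [Function.comp_apply, v, smul_smul]
    convert hS (φ k) using 3
    field_simp [(hm (φ k)).ne']
  · simpa using le_of_tendsto_of_tendsto' (((L.continuous.tendsto _).comp hvφ).add
      ((hminv.mul hBe).comp hφ')) ((hminv.mul hc).comp hφ') fun k => hle' _

end Limits

theorem hasQuadraticGrowthAlong_of_secondOrder [ProperSpace E] {f : E → ℝ} (hf : ContDiff ℝ 2 f)
    {S : Set E} {x d : E} (hd : d ≠ 0) (hcrit : fderiv ℝ f x d = 0)
    (hT2 : ∀ w ∈ secondTangent S x d, ⟪w, d⟫ = 0 →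
      0 < fderiv ℝ f x w + fderiv ℝ (fderiv ℝ f) x d d)
    (hT'' : ∀ w ∈ asympTangent S x d, ⟪w, d⟫ = 0 → w ≠ 0 → 0 < fderiv ℝ f x w) :
    HasQuadraticGrowthAlong f S x d := by
  by_contra hgrowth
  obtain ⟨t, c, e, w, ht, ht0, he, htw, hS, hinner, hc, hle⟩ :=
    exists_secondOrder_seq_of_not_hasQuadraticGrowthAlong hf hd hcrit hgrowth
  by_cases hw : Tendsto (fun k => ‖w k‖) atTop atTop
  · obtain ⟨v, hvT, hv0, hvd, hLv⟩ :=
      exists_mem_asympTangent_of_tendsto_atTop ht ht0 he htw hS hinner hc hle hw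
    exact (hT'' v hvT hvd hv0).not_ge hLv
  · obtain ⟨w₀, hwT, hwd, hLw⟩ :=
      exists_mem_secondTangent_of_not_tendsto_atTop ht ht0 he hS hinner hc hle hw
    exact (hT2 w₀ hwT hwd).not_ge hLw

theorem EReal.lt_of_coe_le_of_pos_coe_sub {a c : ℝ} {s : EReal} (h : 0 < (a : EReal) - s)
    (hc : (c : EReal) ≤ s) : c < a := by
  have := h.trans_le (EReal.sub_le_sub le_rfl hc)
  rw [← EReal.coe_sub] at this
  linarith [EReal.coe_pos.1 this]

theorem coe_inner_le_suppFn {A : Set E} {u : E} (hu : u ∈ A) (l : E) :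
    ((⟪l, u⟫ : ℝ) : EReal) ≤ suppFn A l :=
  le_iSup₂ (f := fun u (_ : u ∈ A) => ((⟪l, u⟫ : ℝ) : EReal)) u hu

theorem stmt17_general {n m : ℕ} (f : EuclideanSpace ℝ (Fin n) → ℝ) (hf : ContDiff ℝ 2 f)
    (g : EuclideanSpace ℝ (Fin n) → EuclideanSpace ℝ (Fin m))
    (K : Set (EuclideanSpace ℝ (Fin m)))
    (xb : EuclideanSpace ℝ (Fin n))
    (d : EuclideanSpace ℝ (Fin n)) (hd0 : d ≠ 0)
    (hcrit : fderiv ℝ f xb d = 0)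
    (l : EuclideanSpace ℝ (Fin m))
    (hl : ∀ u, fderiv ℝ f xb u + ⟪l, fderiv ℝ g xb u⟫ = 0)
    (h1 : ∀ v ∈ fderiv ℝ g xb ''
        (asympTangent (g ⁻¹' K) xb d ∩
          ({w : EuclideanSpace ℝ (Fin n) | ⟪w, d⟫ = 0} \ {0})),
      ⟪l, v⟫ < 0)
    (h2 : (0 : EReal) <
      (((fderiv ℝ (fderiv ℝ f) xb d) d + ⟪l, (fderiv ℝ (fderiv ℝ g) xb d) d⟫ : ℝ) : EReal) -
        suppFn ((fun w => fderiv ℝ g xb w + (fderiv ℝ (fderiv ℝ g) xb d) d) ''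
          (secondTangent (g ⁻¹' K) xb d ∩
            {w : EuclideanSpace ℝ (Fin n) | ⟪w, d⟫ = 0})) l) :
    ∃ κ > (0:ℝ), ∃ ρ > (0:ℝ), ∃ δ > (0:ℝ), ∀ x ∈ g ⁻¹' K,
      x - xb ∈ dirNbhd d ρ δ → f xb + κ * ‖x - xb‖ ^ 2 ≤ f x := by
  refine hasQuadraticGrowthAlong_of_secondOrder hf hd0 hcrit (fun w hw hwd => ?_)
    fun w hw hwd hw0 => ?_
  · have hlt := EReal.lt_of_coe_le_of_pos_coe_sub h2
      (coe_inner_le_suppFn (by exact ⟨w, ⟨hw, hwd⟩, rfl⟩) l)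
    rw [inner_add_right] at hlt
    linarith [hl w]
  · linarith [hl w, h1 _ ⟨w, ⟨hw, hwd, hw0⟩, rfl⟩]

theorem stmt17 {n m : ℕ} (f : EuclideanSpace ℝ (Fin n) → ℝ) (hf : ContDiff ℝ 2 f)
    (g : EuclideanSpace ℝ (Fin n) → EuclideanSpace ℝ (Fin m)) (hg : ContDiff ℝ 2 g)
    (K : Set (EuclideanSpace ℝ (Fin m))) (hK : IsClosed K)
    (xb : EuclideanSpace ℝ (Fin n)) (hxb : xb ∈ g ⁻¹' K)
    (d : EuclideanSpace ℝ (Fin n)) (hd : d ∈ tangentConeB (g ⁻¹' K) xb) (hd0 : d ≠ 0)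
    (hcrit : fderiv ℝ f xb d = 0)
    (l : EuclideanSpace ℝ (Fin m))
    (hl : ∀ u, fderiv ℝ f xb u + ⟪l, fderiv ℝ g xb u⟫ = 0)
    (h1 : ∀ v ∈ fderiv ℝ g xb ''
        (asympTangent (g ⁻¹' K) xb d ∩
          ({w : EuclideanSpace ℝ (Fin n) | ⟪w, d⟫ = 0} \ {0})),
      ⟪l, v⟫ < 0)
    (h2 : (0 : EReal) <
      (((fderiv ℝ (fderiv ℝ f) xb d) d + ⟪l, (fderiv ℝ (fderiv ℝ g) xb d) d⟫ : ℝ) : EReal) -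
        suppFn ((fun w => fderiv ℝ g xb w + (fderiv ℝ (fderiv ℝ g) xb d) d) ''
          (secondTangent (g ⁻¹' K) xb d ∩
            {w : EuclideanSpace ℝ (Fin n) | ⟪w, d⟫ = 0})) l) :
    ∃ κ > (0:ℝ), ∃ ρ > (0:ℝ), ∃ δ > (0:ℝ), ∀ x ∈ g ⁻¹' K,
      x - xb ∈ dirNbhd d ρ δ → f xb + κ * ‖x - xb‖ ^ 2 ≤ f x :=
  stmt17_general f hf g K xb d hd0 hcrit l hl h1 h2
end
end

section
/- Let S ⊆ ℝⁿ be closed, x̄ ∈ S, and let x_k ∈ S \ {x̄} converge to x̄ with t_k := ‖x_k − x̄‖ and (x_k − x̄)/t_k → d for some nonzero d ∈ T_S(x̄). Then, after passing to a subsequence, either (a) (x_k − x̄ − t_k d)/((1/2)t_k²) converges to some w ∈ T²_S(x̄; d) ∩ {d}^⊥, or (b) there exists r_k ↓ 0 with t_k/r_k → 0 such that (x_k − x̄ − t_k d)/((1/2)t_k r_k) converges to some w ∈ T''_S(x̄; d) ∩ ({d}^⊥ \ {0}). -/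
/-!
Write `t_k = ‖x_k - x̄‖` and `z_k = x_k - x̄ - t_k d`, so that `z_k / t_k → 0`. If the
second-order quotients `w_k = z_k / (t_k² / 2)` are bounded along a subsequence, a further
subsequence converges and gives (a). Otherwise `‖w_k‖ → ∞`; with `r_k = 2 ‖z_k‖ / t_k` we get
`r_k → 0`, `t_k / r_k = 1 / ‖w_k‖ → 0`, and the quotients `z_k / (t_k r_k / 2)` are the unit
vectors `z_k / ‖z_k‖`, whose cluster points are nonzero, giving (b). In both cases the limit is
orthogonal to `d`: `x_k = x̄ + t_k (d + (s_k / 2) v_k)` with `s_k → 0` and `v_k` the quotient,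
so `‖d + (s_k / 2) v_k‖ = 1 = ‖d‖`, and expanding the square gives
`2 ⟪d, v_k⟫ + (s_k / 2) ‖v_k‖² = 0`.
-/

open Filter Topology Set
open scoped RealInnerProductSpace

noncomputable section

variable {E : Type*} [NormedAddCommGroup E] [InnerProductSpace ℝ E]

theorem IsCompact.exists_subseq_forall_tendsto_of_eventually {X : Type*} [TopologicalSpace X]
    [FirstCountableTopology X] {K : Set X} (hK : IsCompact K) {P : ℕ → Prop} {u : ℕ → X}
    (h : ∀ᶠ k in atTop, P k ∧ u k ∈ K) :
    ∃ φ : ℕ → ℕ, StrictMono φ ∧ (∀ k, P (φ k)) ∧ ∃ a ∈ K, Tendsto (u ∘ φ) atTop (𝓝 a) := by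
  obtain ⟨φ₁, hφ₁, hPK⟩ := extraction_of_eventually_atTop h
  obtain ⟨a, ha, φ₂, hφ₂, hlim⟩ := hK.tendsto_subseq (x := u ∘ φ₁) fun k => (hPK k).2
  exact ⟨φ₁ ∘ φ₂, hφ₁.comp hφ₂, fun k => (hPK (φ₂ k)).1, a, ha, hlim⟩

theorem exists_subseq_tendsto_or_tendsto_norm_atTop {F : Type*} [SeminormedAddCommGroup F]
    [ProperSpace F] (w : ℕ → F) :
    (∃ φ : ℕ → ℕ, StrictMono φ ∧ ∃ W, Tendsto (w ∘ φ) atTop (𝓝 W)) ∨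
      Tendsto (fun k => ‖w k‖) atTop atTop := by
  by_cases hbdd : ∃ M, ∃ᶠ k in atTop, ‖w k‖ ≤ M
  · obtain ⟨M, hM⟩ := hbdd
    obtain ⟨W, -, φ, hφ, hW⟩ := tendsto_subseq_of_frequently_bounded
      (Metric.isBounded_closedBall (x := 0) (r := M))
      (hM.mono fun k hk => mem_closedBall_zero_iff.2 hk)
    exact Or.inl ⟨φ, hφ, W, hW⟩
  · push Not at hbdd
    exact Or.inr <| tendsto_atTop.2 fun M => (hbdd M).mono fun k hk => hk.le

theorem norm_inv_norm_smul_self {F : Type*} [NormedAddCommGroup F] [NormedSpace ℝ F] {y : F}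
    (hy : y ≠ 0) : ‖‖y‖⁻¹ • y‖ = 1 := by
  rw [norm_smul, norm_inv, norm_norm, inv_mul_cancel₀ (norm_ne_zero_iff.2 hy)]

theorem norm_eq_one_of_tendsto_smul_inv_norm {y : ℕ → E} {d : E} (hy : ∀ k, y k ≠ 0)
    (hdir : Tendsto (fun k => ‖y k‖⁻¹ • y k) atTop (𝓝 d)) : ‖d‖ = 1 :=
  tendsto_nhds_unique hdir.norm <| by
    simp only [norm_inv_norm_smul_self (hy _), tendsto_const_nhds]

theorem tendsto_norm_sub_norm_smul_div_norm {y : ℕ → E} {d : E} (hy : ∀ k, y k ≠ 0)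
    (hdir : Tendsto (fun k => ‖y k‖⁻¹ • y k) atTop (𝓝 d)) :
    Tendsto (fun k => ‖y k - ‖y k‖ • d‖ / ‖y k‖) atTop (𝓝 0) := by
  refine (tendsto_iff_norm_sub_tendsto_zero.1 hdir).congr fun k => ?_
  have hk : ‖y k‖ ≠ 0 := norm_ne_zero_iff.2 (hy k)
  have hquot : ‖y k‖⁻¹ • y k - d = ‖y k‖⁻¹ • (y k - ‖y k‖ • d) := by
    rw [smul_sub, smul_smul, inv_mul_cancel₀ hk, one_smul]
  rw [hquot, norm_smul, norm_inv, norm_norm, div_eq_inv_mul]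

theorem inner_eq_zero_of_norm_add_smul_eq {d w : E} {c : ℕ → ℝ} {v : ℕ → E}
    (hc : ∀ k, c k ≠ 0) (hc0 : Tendsto c atTop (𝓝 0)) (hv : Tendsto v atTop (𝓝 w))
    (hnorm : ∀ k, ‖d + c k • v k‖ = ‖d‖) : ⟪w, d⟫ = 0 := by
  have hexp : ∀ k, 2 * ⟪d, v k⟫ + c k * ‖v k‖ ^ 2 = 0 := fun k => by
    have hsq := norm_add_sq_real d (c k • v k)
    rw [hnorm k, real_inner_smul_right, norm_smul, mul_pow, Real.norm_eq_abs, sq_abs] at hsq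
    have hfactor : c k * (2 * ⟪d, v k⟫ + c k * ‖v k‖ ^ 2) = 0 := by linear_combination -hsq
    exact (mul_eq_zero.1 hfactor).resolve_left (hc k)
  have hlim : Tendsto (fun k => 2 * ⟪d, v k⟫ + c k * ‖v k‖ ^ 2) atTop
      (𝓝 (2 * ⟪d, w⟫ + 0 * ‖w‖ ^ 2)) :=
    ((tendsto_const_nhds.inner hv).const_mul 2).add (hc0.mul (hv.norm.pow 2))
  simp only [hexp, zero_mul, add_zero] at hlim
  rw [real_inner_comm]
  linarith [tendsto_nhds_unique hlim tendsto_const_nhds]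

theorem inner_eq_zero_of_tendsto_secondOrderQuotient {y : ℕ → E} {d W : E} {s : ℕ → ℝ}
    (hy : ∀ k, y k ≠ 0) (hdir : Tendsto (fun k => ‖y k‖⁻¹ • y k) atTop (𝓝 d))
    (hs : ∀ k, 0 < s k) (hs0 : Tendsto s atTop (𝓝 0))
    (hW : Tendsto (fun k => ((1/2 : ℝ) * ‖y k‖ * s k)⁻¹ • (y k - ‖y k‖ • d)) atTop (𝓝 W)) :
    ⟪W, d⟫ = 0 := by
  refine inner_eq_zero_of_norm_add_smul_eq (c := fun k => (1/2 : ℝ) * s k)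
    (fun k => by have := hs k; positivity) (by simpa using hs0.const_mul (1/2 : ℝ)) hW
    fun k => ?_
  have ht : ‖y k‖ ≠ 0 := norm_ne_zero_iff.2 (hy k)
  have hsk : s k ≠ 0 := (hs k).ne'
  have hcoef : (1/2 : ℝ) * s k * ((1/2 : ℝ) * ‖y k‖ * s k)⁻¹ = ‖y k‖⁻¹ := by
    field_simp
  rw [smul_smul, hcoef, smul_sub, smul_smul, inv_mul_cancel₀ ht, one_smul, add_sub_cancel,
    norm_inv_norm_smul_self (hy k), norm_eq_one_of_tendsto_smul_inv_norm hy hdir]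

theorem mem_secondTangent_of_tendsto {S : Set E} {xb d W : E} {x : ℕ → E}
    (hxS : ∀ k, x k ∈ S) (hx : ∀ k, x k ≠ xb) (hxlim : Tendsto x atTop (𝓝 xb))
    (hW : Tendsto (fun k => ((1/2 : ℝ) * ‖x k - xb‖ ^ 2)⁻¹ • (x k - xb - ‖x k - xb‖ • d))
      atTop (𝓝 W)) :
    W ∈ secondTangent S xb d := by
  refine ⟨fun k => ‖x k - xb‖, _, fun k => norm_pos_iff.2 (sub_ne_zero.2 (hx k)),
    tendsto_iff_norm_sub_tendsto_zero.1 hxlim, hW, fun k => ?_⟩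
  have ht : ‖x k - xb‖ ≠ 0 := norm_ne_zero_iff.2 (sub_ne_zero.2 (hx k))
  convert hxS k using 1
  rw [smul_inv_smul₀ (by positivity)]
  abel

theorem mem_asympTangent_of_tendsto {S : Set E} {xb d W : E} {x : ℕ → E} {r : ℕ → ℝ}
    (hxS : ∀ k, x k ∈ S) (hx : ∀ k, x k ≠ xb) (hxlim : Tendsto x atTop (𝓝 xb))
    (hr : ∀ k, 0 < r k) (hr0 : Tendsto r atTop (𝓝 0))
    (htr : Tendsto (fun k => ‖x k - xb‖ / r k) atTop (𝓝 0))
    (hW : Tendsto (fun k => ((1/2 : ℝ) * ‖x k - xb‖ * r k)⁻¹ • (x k - xb - ‖x k - xb‖ • d))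
      atTop (𝓝 W)) :
    W ∈ asympTangent S xb d := by
  refine ⟨fun k => ‖x k - xb‖, r, _, fun k => norm_pos_iff.2 (sub_ne_zero.2 (hx k)), hr,
    tendsto_iff_norm_sub_tendsto_zero.1 hxlim, hr0, htr, hW, fun k => ?_⟩
  have ht : ‖x k - xb‖ ≠ 0 := norm_ne_zero_iff.2 (sub_ne_zero.2 (hx k))
  have hrk := (hr k).ne'
  convert hxS k using 1
  rw [smul_inv_smul₀ (by positivity)]
  abel

theorem norm_div_eq_inv_norm_secondOrderQuotient (y d : E) :
    ‖y‖ / (2 * ‖y - ‖y‖ • d‖ / ‖y‖) = ‖((1/2 : ℝ) * ‖y‖ ^ 2)⁻¹ • (y - ‖y‖ • d)‖⁻¹ := by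
  rw [norm_smul, norm_inv, Real.norm_of_nonneg (by positivity), mul_inv, inv_inv,
    div_div_eq_mul_div]
  ring

theorem exists_subseq_mem_asympTangent_of_tendsto_norm_atTop [ProperSpace E] {S : Set E}
    {xb d : E} {x : ℕ → E} (hxS : ∀ k, x k ∈ S) (hx : ∀ k, x k ≠ xb)
    (hxlim : Tendsto x atTop (𝓝 xb))
    (hdir : Tendsto (fun k => ‖x k - xb‖⁻¹ • (x k - xb)) atTop (𝓝 d))
    (hw : Tendsto (fun k => ‖((1/2 : ℝ) * ‖x k - xb‖ ^ 2)⁻¹ • (x k - xb - ‖x k - xb‖ • d)‖)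
      atTop atTop) :
    ∃ φ : ℕ → ℕ, StrictMono φ ∧ ∃ r : ℕ → ℝ, (∀ k, 0 < r k) ∧ Tendsto r atTop (𝓝 0) ∧
      Tendsto (fun k => ‖x (φ k) - xb‖ / r k) atTop (𝓝 0) ∧
      ∃ w ∈ asympTangent S xb d ∩ ({w : E | ⟪w, d⟫ = 0} \ {0}),
        Tendsto (fun k => ((1/2 : ℝ) * ‖x (φ k) - xb‖ * r k)⁻¹ •
          (x (φ k) - xb - ‖x (φ k) - xb‖ • d)) atTop (𝓝 w) := by
  have hy : ∀ k, x k - xb ≠ 0 := fun k => sub_ne_zero.2 (hx k)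
  set t : ℕ → ℝ := fun k => ‖x k - xb‖
  set z := fun k => x k - xb - t k • d
  set r : ℕ → ℝ := fun k => 2 * ‖z k‖ / t k with hr
  obtain ⟨φ, hφ, hzφ, W, hW1, hW⟩ :=
    (isCompact_sphere 0 1).exists_subseq_forall_tendsto_of_eventually
      (P := fun k => z k ≠ 0) (u := fun k => ‖z k‖⁻¹ • z k) <|
      (hw.eventually_gt_atTop 0).mono fun k hk => by
        have hzk : z k ≠ 0 := by
          rintro h
          apply hk.ne'
          change ‖_ • z k‖ = 0
          rw [h, smul_zero, norm_zero]
        exact ⟨hzk, mem_sphere_zero_iff_norm.2 (norm_inv_norm_smul_self hzk)⟩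
  have hφ' := hφ.tendsto_atTop
  have hr0 : Tendsto r atTop (𝓝 0) := by
    simpa only [mul_zero, ← mul_div_assoc] using
      (tendsto_norm_sub_norm_smul_div_norm hy hdir).const_mul 2
  have hrφ : ∀ k, 0 < r (φ k) := fun k => by
    have := norm_pos_iff.2 (hzφ k); have := norm_pos_iff.2 (hy (φ k)); positivity
  have htr : Tendsto (fun k => t (φ k) / r (φ k)) atTop (𝓝 0) :=
    (hw.comp hφ').inv_tendsto_atTop.congr fun k =>
      (norm_div_eq_inv_norm_secondOrderQuotient _ _).symm
  have hWr : Tendsto (fun k => ((1/2 : ℝ) * t (φ k) * r (φ k))⁻¹ • z (φ k)) atTop (𝓝 W) :=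
    hW.congr fun k => by
      have : t (φ k) ≠ 0 := norm_ne_zero_iff.2 (hy (φ k))
      simp only [Function.comp_apply, hr]
      congr 1
      field_simp
  refine ⟨φ, hφ, r ∘ φ, hrφ, hr0.comp hφ', htr, W, ⟨?_, ?_, ?_⟩, hWr⟩
  · exact mem_asympTangent_of_tendsto (fun k => hxS _) (fun k => hx _) (hxlim.comp hφ')
      hrφ (hr0.comp hφ') htr hWr
  · exact inner_eq_zero_of_tendsto_secondOrderQuotient (fun k => hy _) (hdir.comp hφ') hrφ
      (hr0.comp hφ') hWr
  · exact ne_zero_of_mem_sphere one_ne_zero ⟨W, hW1⟩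

theorem stmt18_general {n : ℕ} (S : Set (EuclideanSpace ℝ (Fin n)))
    (xb : EuclideanSpace ℝ (Fin n))
    (x : ℕ → EuclideanSpace ℝ (Fin n)) (hxS : ∀ k, x k ∈ S) (hxne : ∀ k, x k ≠ xb)
    (hxlim : Tendsto x atTop (nhds xb))
    (d : EuclideanSpace ℝ (Fin n))
    (hdir : Tendsto (fun k => (‖x k - xb‖)⁻¹ • (x k - xb)) atTop (nhds d)) :
    ∃ φ : ℕ → ℕ, StrictMono φ ∧
      ((∃ w ∈ secondTangent S xb d ∩ {w : EuclideanSpace ℝ (Fin n) | ⟪w, d⟫ = 0},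
          Tendsto (fun k =>
            ((1/2 : ℝ) * ‖x (φ k) - xb‖ ^ 2)⁻¹ •
              (x (φ k) - xb - ‖x (φ k) - xb‖ • d)) atTop (nhds w)) ∨
        (∃ r : ℕ → ℝ, (∀ k, 0 < r k) ∧ Tendsto r atTop (nhds 0) ∧
          Tendsto (fun k => ‖x (φ k) - xb‖ / r k) atTop (nhds 0) ∧
          ∃ w ∈ asympTangent S xb d ∩
              ({w : EuclideanSpace ℝ (Fin n) | ⟪w, d⟫ = 0} \ {0}),
            Tendsto (fun k =>
              ((1/2 : ℝ) * ‖x (φ k) - xb‖ * r k)⁻¹ •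
                (x (φ k) - xb - ‖x (φ k) - xb‖ • d)) atTop (nhds w))) := by
  rcases exists_subseq_tendsto_or_tendsto_norm_atTop fun k =>
      ((1/2 : ℝ) * ‖x k - xb‖ ^ 2)⁻¹ • (x k - xb - ‖x k - xb‖ • d) with ⟨φ, hφ, W, hW⟩ | hw
  · have hφ' := hφ.tendsto_atTop
    have hperp : ⟪W, d⟫ = 0 :=
      inner_eq_zero_of_tendsto_secondOrderQuotient (fun k => sub_ne_zero.2 (hxne _))
        (hdir.comp hφ') (fun k => norm_pos_iff.2 (sub_ne_zero.2 (hxne _)))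
        ((tendsto_iff_norm_sub_tendsto_zero.1 hxlim).comp hφ')
        (by simpa only [Function.comp_def, sq, mul_assoc] using hW)
    exact ⟨φ, hφ, Or.inl ⟨W, ⟨mem_secondTangent_of_tendsto (fun k => hxS _)
      (fun k => hxne _) (hxlim.comp hφ') hW, hperp⟩, hW⟩⟩
  · obtain ⟨φ, hφ, hasymp⟩ :=
      exists_subseq_mem_asympTangent_of_tendsto_norm_atTop hxS hxne hxlim hdir hw
    exact ⟨φ, hφ, Or.inr hasymp⟩

theorem stmt18 {n : ℕ} (S : Set (EuclideanSpace ℝ (Fin n))) (hS : IsClosed S)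
    (xb : EuclideanSpace ℝ (Fin n)) (hxb : xb ∈ S)
    (x : ℕ → EuclideanSpace ℝ (Fin n)) (hxS : ∀ k, x k ∈ S) (hxne : ∀ k, x k ≠ xb)
    (hxlim : Tendsto x atTop (nhds xb))
    (d : EuclideanSpace ℝ (Fin n)) (hd0 : d ≠ 0) (hdT : d ∈ tangentConeB S xb)
    (hdir : Tendsto (fun k => (‖x k - xb‖)⁻¹ • (x k - xb)) atTop (nhds d)) :
    ∃ φ : ℕ → ℕ, StrictMono φ ∧
      ((∃ w ∈ secondTangent S xb d ∩ {w : EuclideanSpace ℝ (Fin n) | ⟪w, d⟫ = 0},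
          Tendsto (fun k =>
            ((1/2 : ℝ) * ‖x (φ k) - xb‖ ^ 2)⁻¹ •
              (x (φ k) - xb - ‖x (φ k) - xb‖ • d)) atTop (nhds w)) ∨
        (∃ r : ℕ → ℝ, (∀ k, 0 < r k) ∧ Tendsto r atTop (nhds 0) ∧
          Tendsto (fun k => ‖x (φ k) - xb‖ / r k) atTop (nhds 0) ∧
          ∃ w ∈ asympTangent S xb d ∩
              ({w : EuclideanSpace ℝ (Fin n) | ⟪w, d⟫ = 0} \ {0}),
            Tendsto (fun k =>
              ((1/2 : ℝ) * ‖x (φ k) - xb‖ * r k)⁻¹ •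
                (x (φ k) - xb - ‖x (φ k) - xb‖ • d)) atTop (nhds w))) :=
  stmt18_general S xb x hxS hxne hxlim d hdir
end
end

section
/- Let f(x₁,x₂) = x₁ + x₁² + x₂², g(x₁,x₂) = (x₁ + x₂², 2x₂), K = {(y₁,y₂) ∈ ℝ² : y₁ ≥ y₂²/2}, x̄ = (0,0), and d = (0,1). Then C := g⁻¹(K) = {(x₁,x₂) : x₁ ≥ x₂²}, d ∈ T_C(x̄), T²_K(g(x̄); ∇g(x̄)d) = {(w₁,w₂) : w₁ ≥ 4}, and with λ = (−1,0) one has ∇f(x̄)·d = 0, ∇f(x̄) + ∇g(x̄)ᵀλ = 0, ⟨λ, v⟩ < 0 for all v ∈ T''_K(g(x̄); ∇g(x̄)d) ∩ ∇g(x̄)({d}^⊥ \ {0}), and ∇²_{xx}L(x̄,λ)(d,d) − σ_{T²_K(g(x̄);∇g(x̄)d)}(λ) > 0; consequently x̄ satisfies the second-order growth condition in direction d. -/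
open Filter Topology Set
open scoped RealInnerProductSpace

noncomputable section

variable {E : Type*} [NormedAddCommGroup E] [InnerProductSpace ℝ E]

/-!
Everything here is explicit. `f` and `g` are a linear map plus the diagonal of a bilinear map,
so their first and second derivatives are read off from these two parts. `K` and
`C = g⁻¹(K) = {x₁² ≤ x₀}` are parabolic regions `{a y₁² ≤ y₀}`, and for a direction `v` with
`v₀ = 0` the curve `t v + ½ t² w` lies in such a region iff `2a (v₁ + t w₁ / 2)² ≤ w₀`; letting
`t → 0` gives `T²(0; v) = {w₀ ≥ 2a v₁²}`, which is `{w₀ ≥ 4}` for `a = ½`, `v = ∇g(0)d = (0, 2)`.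
The asymptotic cone lies in `{w₀ ≥ 0}`, and `∇g(0)` maps `{d}^⊥ \ {0}` onto `{(u₀, 0) : u₀ ≠ 0}`,
so `⟨λ, v⟩ = -u₀ < 0` on the intersection. The Hessian term is `2 - 2 = 0` while
`σ ≤ -4` on `{w₀ ≥ 4}`. Finally `x₀ ≥ x₁² ≥ 0` on `C` gives `f x ≥ f 0 + ‖x‖²` on all of `C`,
so the growth condition holds with `κ = 1` for every `ρ` and `δ`.
-/

theorem mem_tangentConeB_of_mem_secondTangent {S : Set E} {x v w : E}
    (hw : w ∈ secondTangent S x v) : v ∈ tangentConeB S x := by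
  obtain ⟨t, wk, ht, ht0, hwk, hmem⟩ := hw
  refine ⟨t, fun k => v + (t k / 2) • wk k, ht, ht0, ?_, fun k => ?_⟩
  · simpa using tendsto_const_nhds.add ((ht0.div_const 2).smul hwk)
  · convert hmem k using 1
    rw [smul_add, smul_smul, add_assoc]
    ring_nf

notation "ℝ²" => EuclideanSpace ℝ (Fin 2)

theorem smul_add_smul_mem_parabola_iff {a t : ℝ} {v w : ℝ²} (hv : v 0 = 0) (ht : 0 < t) :
    0 + t • v + (1 / 2 * t ^ 2) • w ∈ {y : ℝ² | a * y 1 ^ 2 ≤ y 0} ↔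
      2 * a * (v 1 + t / 2 * w 1) ^ 2 ≤ w 0 := by
  have hscale : 0 < 1 / 2 * t ^ 2 := by positivity
  have hlhs : a * (t * v 1 + 1 / 2 * t ^ 2 * w 1) ^ 2 =
      1 / 2 * t ^ 2 * (2 * a * (v 1 + t / 2 * w 1) ^ 2) := by ring
  simp only [mem_ofPred_eq, PiLp.add_apply, PiLp.smul_apply, smul_eq_mul, hv,
    zero_add, mul_zero, hlhs]
  exact mul_le_mul_iff_right₀ hscale

theorem secondTangent_parabola (a : ℝ) {v : ℝ²} (hv : v 0 = 0) :
    secondTangent {y : ℝ² | a * y 1 ^ 2 ≤ y 0} 0 v = {w | 2 * a * v 1 ^ 2 ≤ w 0} := by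
  ext w
  constructor
  · rintro ⟨t, wk, ht, ht0, hwk, hmem⟩
    have hcoord (i : Fin 2) : Tendsto (fun k => wk k i) atTop (𝓝 (w i)) :=
      ((EuclideanSpace.proj i).continuous.tendsto w).comp hwk
    have hlim : Tendsto (fun k => 2 * a * (v 1 + t k / 2 * wk k 1) ^ 2) atTop
        (𝓝 (2 * a * (v 1 + 0 / 2 * w 1) ^ 2)) :=
      (((ht0.div_const 2).mul (hcoord 1)).const_add _).pow 2 |>.const_mul _
    rw [zero_div, zero_mul, add_zero] at hlim
    exact le_of_tendsto_of_tendsto' hlim (hcoord 0)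
      fun k => (smul_add_smul_mem_parabola_iff hv (ht k)).1 (hmem k)
  · intro hw
    set t : ℕ → ℝ := fun k => 1 / (k + 1)
    have ht0 : Tendsto t atTop (𝓝 0) := tendsto_one_div_add_atTop_nhds_zero_nat
    -- raise the first coordinate of `w` exactly by the defect of the `k`-th curve
    set c : ℕ → ℝ := fun k => 2 * a * (v 1 + t k / 2 * w 1) ^ 2 - 2 * a * v 1 ^ 2
    refine ⟨t, fun k => w + c k • EuclideanSpace.single 0 1, fun k => by positivity, ht0, ?_,
      fun k => (smul_add_smul_mem_parabola_iff hv (by positivity)).2 ?_⟩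
    · have hc : Tendsto c atTop (𝓝 (2 * a * (v 1 + 0 / 2 * w 1) ^ 2 - 2 * a * v 1 ^ 2)) :=
        ((((ht0.div_const 2).mul_const _).const_add _).pow 2 |>.const_mul _).sub_const _
      rw [zero_div, zero_mul, add_zero, sub_self] at hc
      simpa using
        tendsto_const_nhds.add (hc.smul_const (EuclideanSpace.single (0 : Fin 2) (1 : ℝ)))
    · simp only [PiLp.add_apply, PiLp.smul_apply, smul_eq_mul, PiLp.single_apply]
      simp only [mem_ofPred_eq] at hw
      norm_num [c]
      linarith

theorem asympTangent_parabola_subset {a : ℝ} (ha : 0 ≤ a) {v : ℝ²} (hv : v 0 = 0) :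
    asympTangent {y : ℝ² | a * y 1 ^ 2 ≤ y 0} 0 v ⊆ {w | 0 ≤ w 0} := by
  rintro w ⟨t, r, wk, ht, hr, -, -, -, hwk, hmem⟩
  refine ge_of_tendsto' (((EuclideanSpace.proj 0).continuous.tendsto w).comp hwk) fun k => ?_
  have hk := hmem k
  have := ht k
  have := hr k
  simp only [mem_ofPred_eq, PiLp.add_apply, PiLp.smul_apply, smul_eq_mul, hv, zero_add,
    mul_zero] at hk
  exact (mul_nonneg_iff_of_pos_left (by positivity)).1 (le_trans (by positivity) hk)

theorem suppFn_le {A : Set E} {l : E} {m : ℝ} (h : ∀ u ∈ A, ⟪l, u⟫ ≤ m) : suppFn A l ≤ m :=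
  iSup₂_le fun u hu => EReal.coe_le_coe_iff.2 (h u hu)

theorem pos_sub_suppFn {A : Set E} {l : E} {c m : ℝ} (h : ∀ u ∈ A, ⟪l, u⟫ ≤ m) (hm : m < c) :
    (0 : EReal) < c - suppFn A l :=
  calc (0 : EReal) < ((c - m : ℝ) : EReal) := EReal.coe_pos.2 (sub_pos.2 hm)
    _ = (c : EReal) - m := EReal.coe_sub c m
    _ ≤ c - suppFn A l := EReal.sub_le_sub le_rfl (suppFn_le h)

section Quadratic
variable {𝕜 V W : Type*} [NontriviallyNormedField 𝕜] [NormedAddCommGroup V] [NormedSpace 𝕜 V]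
  [NormedAddCommGroup W] [NormedSpace 𝕜 W] (L : V →L[𝕜] W) (B : V →L[𝕜] V →L[𝕜] W)

theorem hasFDerivAt_linear_add_bilinear_diag (x : V) :
    HasFDerivAt (fun y => L y + B y y) (L + (B + B.flip) x) x := by
  refine (L.hasFDerivAt.add
    (B.hasFDerivAt_of_bilinear (hasFDerivAt_id x) (hasFDerivAt_id x))).congr_fderiv ?_
  ext u
  simp

theorem fderiv_linear_add_bilinear_diag :
    fderiv 𝕜 (fun y => L y + B y y) = fun x => L + (B + B.flip) x :=
  funext fun x => (hasFDerivAt_linear_add_bilinear_diag L B x).fderiv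

theorem fderiv_fderiv_linear_add_bilinear_diag (x : V) :
    fderiv 𝕜 (fderiv 𝕜 (fun y => L y + B y y)) x = B + B.flip := by
  rw [fderiv_linear_add_bilinear_diag]
  exact ((B + B.flip).hasFDerivAt.const_add L).fderiv

end Quadratic

namespace ParabolaExample

def linPart : ℝ² →L[ℝ] ℝ² :=
  (EuclideanSpace.proj 0).smulRight (EuclideanSpace.single 0 1) +
    (2 : ℝ) • (EuclideanSpace.proj 1).smulRight (EuclideanSpace.single 1 1)

def sqPart : ℝ² →L[ℝ] ℝ² →L[ℝ] ℝ :=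
  (EuclideanSpace.proj 0).smulRight (EuclideanSpace.proj 0) +
    (EuclideanSpace.proj 1).smulRight (EuclideanSpace.proj 1)

def quadPart : ℝ² →L[ℝ] ℝ² →L[ℝ] ℝ² :=
  (EuclideanSpace.proj 1).smulRight
    ((EuclideanSpace.proj 1).smulRight (EuclideanSpace.single 0 1))

@[simp] theorem sqPart_apply (u v : ℝ²) : sqPart u v = u 0 * v 0 + u 1 * v 1 := by simp [sqPart]
@[simp] theorem linPart_apply_zero (u : ℝ²) : linPart u 0 = u 0 := by simp [linPart]
@[simp] theorem linPart_apply_one (u : ℝ²) : linPart u 1 = 2 * u 1 := by simp [linPart]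
@[simp] theorem quadPart_apply_zero (u v : ℝ²) : quadPart u v 0 = u 1 * v 1 := by simp [quadPart]
@[simp] theorem quadPart_apply_one (u v : ℝ²) : quadPart u v 1 = 0 := by simp [quadPart]

theorem pos_of_mem_asympTangent_inter_image {d v : ℝ²} (hd0 : d 0 = 0) (hd1 : d 1 = 1)
    (hv : v ∈ asympTangent {y : ℝ² | 1 / 2 * y 1 ^ 2 ≤ y 0} 0 (linPart d) ∩
      linPart '' ({w | ⟪w, d⟫ = 0} \ {0})) : 0 < v 0 := by
  obtain ⟨hv, u, ⟨hud, hu⟩, rfl⟩ := hv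
  have hu1 : u 1 = 0 := by simpa [PiLp.inner_apply, Fin.sum_univ_two, hd0, hd1] using hud
  have hu0 : u 0 ≠ 0 := fun hu0 => hu (by ext i; fin_cases i <;> simp [hu0, hu1])
  have := asympTangent_parabola_subset (by norm_num) (by simp [hd0]) hv
  simp only [mem_ofPred_eq, linPart_apply_zero] at this ⊢
  exact lt_of_le_of_ne this (Ne.symm hu0)

theorem norm_sq_le_proj_add_sqPart {x : ℝ²} (hx : x 1 ^ 2 ≤ x 0) :
    ‖x‖ ^ 2 ≤ EuclideanSpace.proj 0 x + sqPart x x := by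
  simp only [EuclideanSpace.norm_sq_eq, Fin.sum_univ_two, Real.norm_eq_abs, sq_abs,
    PiLp.proj_apply, sqPart_apply]
  nlinarith [sq_nonneg (x 1)]

end ParabolaExample

open ParabolaExample

theorem stmt19 (f : EuclideanSpace ℝ (Fin 2) → ℝ)
    (hf : ∀ x : EuclideanSpace ℝ (Fin 2), f x = x 0 + (x 0) ^ 2 + (x 1) ^ 2)
    (g : EuclideanSpace ℝ (Fin 2) → EuclideanSpace ℝ (Fin 2))
    (hg : ∀ x : EuclideanSpace ℝ (Fin 2), g x 0 = x 0 + (x 1) ^ 2 ∧ g x 1 = 2 * x 1)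
    (K : Set (EuclideanSpace ℝ (Fin 2)))
    (hK : K = {y : EuclideanSpace ℝ (Fin 2) | (y 1) ^ 2 / 2 ≤ y 0})
    (xb d l : EuclideanSpace ℝ (Fin 2)) (hxb : xb = 0)
    (hd0 : d 0 = 0) (hd1 : d 1 = 1) (hl0 : l 0 = -1) (hl1 : l 1 = 0) :
    g ⁻¹' K = {x : EuclideanSpace ℝ (Fin 2) | (x 1) ^ 2 ≤ x 0} ∧
    d ∈ tangentConeB (g ⁻¹' K) xb ∧
    secondTangent K (g xb) (fderiv ℝ g xb d) =
      {w : EuclideanSpace ℝ (Fin 2) | 4 ≤ w 0} ∧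
    fderiv ℝ f xb d = 0 ∧
    (∀ u, fderiv ℝ f xb u + ⟪l, fderiv ℝ g xb u⟫ = 0) ∧
    (∀ v ∈ asympTangent K (g xb) (fderiv ℝ g xb d) ∩
        (fderiv ℝ g xb '' ({w : EuclideanSpace ℝ (Fin 2) | ⟪w, d⟫ = 0} \ {0})),
      ⟪l, v⟫ < 0) ∧
    (0 : EReal) <
      (((fderiv ℝ (fderiv ℝ f) xb d) d + ⟪l, (fderiv ℝ (fderiv ℝ g) xb d) d⟫ : ℝ) : EReal) -
        suppFn (secondTangent K (g xb) (fderiv ℝ g xb d)) l ∧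
    ∃ κ > (0:ℝ), ∃ ρ > (0:ℝ), ∃ δ > (0:ℝ), ∀ x ∈ g ⁻¹' K,
      x - xb ∈ dirNbhd d ρ δ → f xb + κ * ‖x - xb‖ ^ 2 ≤ f x := by
  have hf' : f = fun y => EuclideanSpace.proj 0 y + sqPart y y := by
    funext y; simp [hf, sq, add_assoc]
  have hg' : g = fun y => linPart y + quadPart y y := by
    funext y; ext i; fin_cases i <;> simp [hg, sq]
  have hK' : K = {y | 1 / 2 * y 1 ^ 2 ≤ y 0} := by
    rw [hK]; ext y; simp only [mem_ofPred_eq]; ring_nf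
  have hl : ∀ u : ℝ², ⟪l, u⟫ = -u 0 := fun u => by
    simp [PiLp.inner_apply, Fin.sum_univ_two, hl0, hl1]
  have hC : g ⁻¹' K = {x | x 1 ^ 2 ≤ x 0} := by
    ext x; simp only [hK', mem_preimage, mem_ofPred_eq, hg]; constructor <;> intro h <;> linarith
  subst hg' hf' hxb
  have hdg : linPart d 0 = 0 ∧ linPart d 1 = 2 := by simp [hd0, hd1]
  have hT2 : secondTangent K 0 (linPart d) = {w | 4 ≤ w 0} := by
    rw [hK', secondTangent_parabola _ hdg.1, hdg.2]; norm_num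
  rw [fderiv_fderiv_linear_add_bilinear_diag, fderiv_fderiv_linear_add_bilinear_diag]
  simp only [fderiv_linear_add_bilinear_diag, map_zero, add_zero, hC, hT2]
  refine ⟨trivial, ?_, trivial, by simpa using hd0, fun u => by simp [hl], fun v hv => ?_, ?_,
    ⟨1, one_pos, 1, one_pos, 1, one_pos, fun x hx _ => ?_⟩⟩
  · rw [show {x : ℝ² | x 1 ^ 2 ≤ x 0} = {x | 1 * x 1 ^ 2 ≤ x 0} by simp]
    refine mem_tangentConeB_of_mem_secondTangent (w := EuclideanSpace.single 0 2) ?_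
    rw [secondTangent_parabola 1 hd0]
    simp [hd1]
  · rw [hl]
    exact neg_neg_of_pos (pos_of_mem_asympTangent_inter_image hd0 hd1 (hK' ▸ hv))
  · have hhess : ((sqPart + sqPart.flip) d) d + ⟪l, ((quadPart + quadPart.flip) d) d⟫ = 0 := by
      simp [hl, hd0, hd1]
    rw [hhess]
    exact pos_sub_suppFn (m := -4) (fun u hu => by rw [hl]; exact neg_le_neg hu) (by norm_num)
  · simpa using norm_sq_le_proj_add_sqPart hx
end
end
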